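/- Every classical Kripke model C = (K,≤,D,strong-refutation,exploding) gives rise to an intuitionistic Kripke model with exploding worlds I on the same frame, where atomic intuitionistic forcing is defined as classical (non-strong) forcing, such that for every world w and formula A: w intuitionistically forces A* in I if and only if w classically forces A in C, where A* is the Gödel–Gentzen double-negation translation leaving atoms, ⊥ and ⊤ unchanged, commuting with ∧, →, ∀, and setting (A∨B)* = ¬(¬A* ∧ ¬B*) and (∃x.A)* = ¬∀x.¬A*. -/

import Mathlib

/-- Formulas of predicate logic (higher-order abstract syntax over a
type `C` of constants/domain elements). -/
inductive Formula (C : Type) : Type where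
  | atom : ℕ → List C → Formula C
  | top : Formula C
  | bot : Formula C
  | and : Formula C → Formula C → Formula C
  | or : Formula C → Formula C → Formula C
  | imp : Formula C → Formula C → Formula C
  | all : (C → Formula C) → Formula C
  | ex : (C → Formula C) → Formula C

/-- The data of a classical Kripke model: possible worlds, ordering,
domain function, strong refutation on atomic sentences, exploding predicate. -/
structure CKPre (C : Type) where
  K : Type
  le : K → K → Prop
  D : K → Set C
  srefAtom : K → ℕ → List C → Prop
  expl : K → Prop

namespace CKPre

variable {C : Type}

/-- Orthogonality: every greater world satisfying `S` is exploding. -/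
def orth (M : CKPre C) (S : M.K → Prop) (w : M.K) : Prop :=
  ∀ w', M.le w w' → S w' → M.expl w'

/-- Strong refutation, extended from atomic to composite sentences;
(non-strong) forcing and refutation are expressed via `orth`. -/
def sref (M : CKPre C) : Formula C → M.K → Prop
  | .atom p args, w => M.srefAtom w p args
  | .bot, _ => True
  | .top, _ => False
  | .and A B, w => M.orth (M.orth (M.sref A)) w ∨ M.orth (M.orth (M.sref B)) w
  | .or A B, w => M.orth (M.orth (M.sref A)) w ∧ M.orth (M.orth (M.sref B)) w
  | .imp A B, w => M.orth (M.sref A) w ∧ M.orth (M.orth (M.sref B)) w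
  | .all A, w => ∃ d ∈ M.D w, M.orth (M.orth (M.sref (A d))) w
  | .ex A, w => ∀ w', M.le w w' → ∀ d ∈ M.D w', M.orth (M.orth (M.sref (A d))) w'

/-- `w` forces `A`: every `w' ≥ w` strongly refuting `A` is exploding. -/
def force (M : CKPre C) (A : Formula C) : M.K → Prop := M.orth (M.sref A)

/-- `w` refutes `A`: every `w' ≥ w` forcing `A` is exploding. -/
def refute (M : CKPre C) (A : Formula C) : M.K → Prop := M.orth (M.force A)

end CKPre

/-- A classical Kripke model: the data together with the required properties
(inhabited poset of worlds, monotone domain, monotone strong refutation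
on atoms with arguments in the domain, monotone exploding predicate). -/
structure CKModel (C : Type) where
  pre : CKPre C
  le_refl : ∀ w, pre.le w w
  le_trans : ∀ w₁ w₂ w₃, pre.le w₁ w₂ → pre.le w₂ w₃ → pre.le w₁ w₃
  le_antisymm : ∀ w₁ w₂, pre.le w₁ w₂ → pre.le w₂ w₁ → w₁ = w₂
  nonempty : Nonempty pre.K
  D_mono : ∀ w w', pre.le w w' → pre.D w ⊆ pre.D w'
  srefAtom_dom : ∀ w p args, pre.srefAtom w p args → ∀ d ∈ args, d ∈ pre.D w
  srefAtom_mono : ∀ w w' p args, pre.le w w' → pre.srefAtom w p args → pre.srefAtom w' p args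
  expl_mono : ∀ w w', pre.le w w' → pre.expl w → pre.expl w'

/-- Negation ¬A := A → ⊥. -/
def Formula.neg {C : Type} (A : Formula C) : Formula C := Formula.imp A Formula.bot

namespace CKPre

variable {C : Type}

/-- The intuitionistic Kripke model with exploding worlds induced by a
classical Kripke model: same frame, same domain, same exploding predicate;
intuitionistic forcing of atoms is classical (non-strong) forcing, the other
clauses are the standard intuitionistic ones except that `⊥` is forced
exactly at exploding worlds. -/
def iforce (M : CKPre C) : Formula C → M.K → Prop
  | .atom p args, w => M.force (.atom p args) w
  | .top, _ => True
  | .bot, w => M.expl w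
  | .and A B, w => M.iforce A w ∧ M.iforce B w
  | .or A B, w => M.iforce A w ∨ M.iforce B w
  | .imp A B, w => ∀ w', M.le w w' → M.iforce A w' → M.iforce B w'
  | .all A, w => ∀ w', M.le w w' → ∀ d ∈ M.D w', M.iforce (A d) w'
  | .ex A, w => ∃ d ∈ M.D w, M.iforce (A d) w

end CKPre

/-- The Gödel–Gentzen double-negation translation, leaving atoms, `⊥` and `⊤`
unchanged, commuting with `∧`, `→`, `∀`, and with
`(A ∨ B)* = ¬(¬A* ∧ ¬B*)` and `(∃x.A)* = ¬∀x.¬A*`. -/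
def Formula.gg {C : Type} : Formula C → Formula C
  | .atom p args => .atom p args
  | .top => .top
  | .bot => .bot
  | .and A B => .and A.gg B.gg
  | .imp A B => .imp A.gg B.gg
  | .all A => .all (fun d => (A d).gg)
  | .or A B => Formula.neg (.and (Formula.neg A.gg) (Formula.neg B.gg))
  | .ex A => Formula.neg (.all (fun d => Formula.neg (A d).gg))

/-!
Classical forcing is `orth ∘ sref` and refutation is `orth ∘ orth ∘ sref`, while in the induced
intuitionistic model `¬X` is forced exactly where `orth` of the forcing of `X` holds. Hence the
Gödel–Gentzen clauses for `∨` and `∃` reproduce the classical clauses literally. For `∧`, `→`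
and `∀`, classical forcing already satisfies the intuitionistic clauses: it is persistent, and
strong refutation implies refutation.
-/

namespace CKPre

variable {C : Type} (M : CKPre C)

theorem orth_congr {S T : M.K → Prop} (h : ∀ v, S v ↔ T v) (w : M.K) :
    M.orth S w ↔ M.orth T w :=
  forall₂_congr fun v _ => imp_congr_left (h v)

theorem force_top (w : M.K) : M.force .top w :=
  fun _ _ h => (h : False).elim

end CKPre

namespace CKModel

variable {C : Type} (M : CKModel C)

theorem orth_of_le {S : M.pre.K → Prop} {w v : M.pre.K} (h : M.pre.orth S w)
    (hwv : M.pre.le w v) : M.pre.orth S v :=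
  fun u hvu hu => h u (M.le_trans _ _ _ hwv hvu) hu

theorem expl_of_orth {S : M.pre.K → Prop} {w : M.pre.K} (h : M.pre.orth S w) (hS : S w) :
    M.pre.expl w :=
  h w (M.le_refl w) hS

theorem sref_of_le {A : Formula C} {w v : M.pre.K} (h : M.pre.sref A w) (hwv : M.pre.le w v) :
    M.pre.sref A v := by
  cases A with
  | atom p args => exact M.srefAtom_mono _ _ _ _ hwv h
  | top => exact h
  | bot => trivial
  | and A B => exact h.imp (M.orth_of_le · hwv) (M.orth_of_le · hwv)
  | or A B => exact ⟨M.orth_of_le h.1 hwv, M.orth_of_le h.2 hwv⟩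
  | imp A B => exact ⟨M.orth_of_le h.1 hwv, M.orth_of_le h.2 hwv⟩
  | all A =>
    obtain ⟨d, hd, hA⟩ := h
    exact ⟨d, M.D_mono _ _ hwv hd, M.orth_of_le hA hwv⟩
  | ex A => exact fun u hvu => h u (M.le_trans _ _ _ hwv hvu)

theorem refute_of_sref {A : Formula C} {w : M.pre.K} (h : M.pre.sref A w) :
    M.pre.refute A w :=
  fun _ hwv hf => M.expl_of_orth hf (M.sref_of_le h hwv)

theorem force_bot_iff (w : M.pre.K) : M.pre.force .bot w ↔ M.pre.expl w :=
  ⟨fun h => M.expl_of_orth h trivial, fun h _ hwv _ => M.expl_mono _ _ hwv h⟩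

theorem force_and_iff (A B : Formula C) (w : M.pre.K) :
    M.pre.force (.and A B) w ↔ M.pre.force A w ∧ M.pre.force B w := by
  constructor
  · intro h
    exact ⟨fun v hwv hA => h v hwv (.inl (M.refute_of_sref hA)),
      fun v hwv hB => h v hwv (.inr (M.refute_of_sref hB))⟩
  · rintro ⟨hA, hB⟩ v hwv (hrA | hrB)
    · exact M.expl_of_orth hrA (M.orth_of_le hA hwv)
    · exact M.expl_of_orth hrB (M.orth_of_le hB hwv)

theorem force_imp_iff (A B : Formula C) (w : M.pre.K) :
    M.pre.force (.imp A B) w ↔ ∀ v, M.pre.le w v → M.pre.force A v → M.pre.force B v := by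
  constructor
  · intro h v hwv hA u hvu hB
    exact h u (M.le_trans _ _ _ hwv hvu) ⟨M.orth_of_le hA hvu, M.refute_of_sref hB⟩
  · rintro h v hwv ⟨hA, hrB⟩
    exact M.expl_of_orth hrB (h v hwv hA)

theorem force_all_iff (A : C → Formula C) (w : M.pre.K) :
    M.pre.force (.all A) w ↔ ∀ v, M.pre.le w v → ∀ d ∈ M.pre.D v, M.pre.force (A d) v := by
  constructor
  · intro h v hwv d hd u hvu hA
    exact h u (M.le_trans _ _ _ hwv hvu) ⟨d, M.D_mono _ _ hvu hd, M.refute_of_sref hA⟩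
  · rintro h v hwv ⟨d, hd, hrA⟩
    exact M.expl_of_orth hrA (h v hwv d hd)

end CKModel

/-- for every classical Kripke model, every world `w` and every
formula `A`, `w` intuitionistically forces `A*` (in the induced intuitionistic
Kripke model with exploding worlds) iff `w` classically forces `A`. -/
theorem iforce_gg_iff_force {C : Type} (M : CKModel C) (A : Formula C) (w : M.pre.K) :
    M.pre.iforce A.gg w ↔ M.pre.force A w := by
  induction A generalizing w with
  | atom p args => rfl
  | top => exact iff_of_true trivial (M.pre.force_top w)
  | bot => exact (M.force_bot_iff w).symm
  | and A B ihA ihB => exact (and_congr (ihA w) (ihB w)).trans (M.force_and_iff A B w).symm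
  | imp A B ihA ihB =>
    exact (forall₂_congr fun v _ => imp_congr (ihA v) (ihB v)).trans (M.force_imp_iff A B w).symm
  | all A ih =>
    exact (forall₂_congr fun v _ => forall₂_congr fun d _ => ih d v).trans
      (M.force_all_iff A w).symm
  | or A B ihA ihB =>
    exact M.pre.orth_congr
      (fun v => and_congr (M.pre.orth_congr ihA v) (M.pre.orth_congr ihB v)) w
  | ex A ih =>
    exact M.pre.orth_congr (fun v => forall₂_congr fun u _ =>
      forall₂_congr fun d _ => M.pre.orth_congr (ih d) u) w
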